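/- arXiv:1808.10787 — 4 statements merged into one kernel-verified Lean document; each statement's English description precedes it below -/
import Mathlib

section
/- Let F be a field and let g_i(x_i) = ∏_{s ∈ S_i}(x_i − s) for nonempty finite subsets S_i ⊆ F, 1 ≤ i ≤ n. A polynomial f ∈ F[x_1,...,x_n] lies in the ideal ⟨g_1,...,g_n⟩ if and only if f vanishes on every point of S_1 × S_2 × ⋯ × S_n. -/
open MvPolynomial

namespace MvPolynomial

variable {R σ : Type*} [CommRing R]

theorem eval_eq_zero_of_mem_span_prod_X_sub_C (S : σ → Finset R) {f : MvPolynomial σ R}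
    (hf : f ∈ Ideal.span (Set.range fun i => ∏ s ∈ S i, (X i - C s)))
    (x : σ → R) (hx : ∀ i, x i ∈ S i) : eval x f = 0 := by
  have hle : Ideal.span (Set.range fun i => ∏ s ∈ S i, (X i - C s)) ≤ RingHom.ker (eval x) := by
    refine Ideal.span_le.mpr ?_
    rintro _ ⟨i, rfl⟩
    simpa only [SetLike.mem_coe, RingHom.mem_ker, map_prod, map_sub, eval_X, eval_C] using
      Finset.prod_eq_zero (hx i) (sub_self (x i))
  exact hle hf

theorem mem_span_prod_X_sub_C_of_eval_eq_zero [IsDomain R] [Finite σ] (S : σ → Finset R)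
    (hS : ∀ i, (S i).Nonempty) {f : MvPolynomial σ R}
    (hf : ∀ x : σ → R, (∀ i, x i ∈ S i) → eval x f = 0) :
    f ∈ Ideal.span (Set.range fun i => ∏ s ∈ S i, (X i - C s)) := by
  obtain ⟨h, -, rfl⟩ := combinatorial_nullstellensatz_exists_linearCombination S hS f hf
  exact Finsupp.mem_span_range_iff_exists_finsupp.mpr
    ⟨h, (Finsupp.linearCombination_apply _ _).symm⟩

end MvPolynomial

theorem stmt_7 (F : Type*) [Field F] (n : ℕ) (S : Fin n → Finset F)
    (hS : ∀ i, (S i).Nonempty) (f : MvPolynomial (Fin n) F) :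
    f ∈ Ideal.span
        (Set.range fun i : Fin n => ∏ s ∈ S i, ((X i : MvPolynomial (Fin n) F) - C s)) ↔
      ∀ α : Fin n → F, (∀ i, α i ∈ S i) → eval α f = 0 :=
  ⟨eval_eq_zero_of_mem_span_prod_X_sub_C S, mem_span_prod_X_sub_C_of_eval_eq_zero S hS⟩
end

section
/- Let G be a graph on vertex set {1,...,n} with adjacency matrix A_G, let k < n, and define f = ∏_{s=1}^{C(n,2)} (x A_G xᵀ − s) · ∏_{t=0}^{n−k−1} (Σ_{i=1}^n x_i − t) over ℚ. Then G has a vertex cover of size at most k if and only if f does not belong to the ideal ⟨x_1² − x_1, ..., x_n² − x_n⟩. -/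
/-!
By the Combinatorial Nullstellensatz, the ideal `⟨x_i² - x_i⟩` consists exactly of the polynomials
vanishing on `{0,1}^n`. At the Boolean point with support `T`, the edge sum counts the edges inside
`T`, an integer in `[0, C(n,2)]`, and the vertex sum equals `#T`. Hence `f` is nonzero there exactly
when `T` is an independent set with at least `n - k` vertices, that is, when its complement is a
vertex cover with at most `k` vertices.
-/

open MvPolynomial Finset

section BooleanIdeal

variable {σ R : Type*} [CommRing R]

theorem prod_X_sub_C_zero_one [Nontrivial R] [DecidableEq R] (i : σ) :
    ∏ r ∈ ({0, 1} : Finset R), (X i - C r : MvPolynomial σ R) = X i ^ 2 - X i := by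
  rw [prod_pair zero_ne_one]
  simp only [map_zero, sub_zero, map_one]
  ring

theorem mem_span_X_sq_sub_X_iff [Fintype σ] [IsDomain R] {f : MvPolynomial σ R} :
    f ∈ Ideal.span (Set.range fun i => X i ^ 2 - X i) ↔
      ∀ T : Finset σ, eval ((T : Set σ).indicator 1) f = 0 := by
  classical
  constructor
  · intro hf T
    refine (Ideal.span_le.mpr ?_ : _ ≤ RingHom.ker (eval ((T : Set σ).indicator 1))) hf
    rintro _ ⟨i, rfl⟩
    by_cases hi : i ∈ T <;> simp [hi]
  · intro hf
    obtain ⟨h, -, rfl⟩ := combinatorial_nullstellensatz_exists_linearCombination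
      (fun _ => {0, 1}) (fun _ => insert_nonempty _ _) f fun x hx => by
        have hx_eq : x = (({i | x i = 1} : Finset σ) : Set σ).indicator 1 := by
          ext i
          rcases mem_insert.mp (hx i) with h | h <;> simp_all
        exact hx_eq ▸ hf _
    simp_rw [prod_X_sub_C_zero_one]
    rw [Ideal.span, ← Finsupp.range_linearCombination]
    exact LinearMap.mem_range_self _ h

end BooleanIdeal

section NatCastProducts

variable {R : Type*} [CommRing R] [IsDomain R] [CharZero R]

theorem prod_Icc_natCast_sub_ne_zero_iff {m N : ℕ} (hm : m ≤ N) :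
    ∏ s ∈ Icc 1 N, ((m : R) - s) ≠ 0 ↔ m = 0 := by
  simp only [ne_eq, prod_eq_zero_iff, mem_Icc, sub_eq_zero, Nat.cast_inj, not_exists, not_and]
  constructor
  · intro h
    by_contra hm0
    exact h m ⟨Nat.one_le_iff_ne_zero.mpr hm0, hm⟩ rfl
  · rintro rfl s ⟨hs, -⟩ rfl
    omega

theorem prod_range_natCast_sub_ne_zero_iff {m N : ℕ} :
    ∏ t ∈ range N, ((m : R) - t) ≠ 0 ↔ N ≤ m := by
  simp only [ne_eq, prod_eq_zero_iff, mem_range, sub_eq_zero, Nat.cast_inj, not_exists, not_and]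
  constructor
  · intro h
    by_contra! hm
    exact h m hm rfl
  · rintro h t ht rfl
    omega

end NatCastProducts

namespace SimpleGraph

variable {V : Type*} (G : SimpleGraph V)

theorem exists_isVertexCover_card_le_iff [Fintype V] (k : ℕ) :
    (∃ S : Finset V, #S ≤ k ∧ G.IsVertexCover S) ↔
      ∃ T : Finset V, G.IsIndepSet T ∧ Fintype.card V - k ≤ #T := by
  classical
  constructor
  · rintro ⟨S, hSk, hS⟩
    refine ⟨Sᶜ, by simpa using hS, ?_⟩
    rw [card_compl]
    omega
  · rintro ⟨T, hT, hTk⟩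
    refine ⟨Tᶜ, ?_, by simpa using hT⟩
    rw [card_compl]
    omega

variable [LinearOrder V] [DecidableRel G.Adj]

theorem card_filter_adj_eq_zero_iff (T : Finset V) :
    #{p ∈ T ×ˢ T | p.1 < p.2 ∧ G.Adj p.1 p.2} = 0 ↔ G.IsIndepSet T := by
  rw [card_eq_zero, filter_eq_empty_iff]
  constructor
  · intro h i hi j hj hij hadj
    rcases hij.lt_or_gt with hlt | hlt
    · exact h (x := (i, j)) (mem_product.mpr ⟨hi, hj⟩) ⟨hlt, hadj⟩
    · exact h (x := (j, i)) (mem_product.mpr ⟨hj, hi⟩) ⟨hlt, hadj.symm⟩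
  · rintro hT ⟨i, j⟩ hp ⟨hlt, hadj⟩
    rw [mem_product] at hp
    exact hT hp.1 hp.2 hlt.ne hadj

theorem card_filter_adj_le_choose_two [Fintype V] (T : Finset V) :
    #{p ∈ T ×ˢ T | p.1 < p.2 ∧ G.Adj p.1 p.2} ≤ (Fintype.card V).choose 2 :=
  calc #{p ∈ T ×ˢ T | p.1 < p.2 ∧ G.Adj p.1 p.2}
      _ ≤ #{p ∈ T ×ˢ T | p.1 < p.2} := card_le_card (monotone_filter_right _ fun _ _ h => h.1)
      _ = (#T).choose 2 := card_product_filter_lt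
      _ ≤ (Fintype.card V).choose 2 := Nat.choose_le_choose 2 (card_le_univ T)

end SimpleGraph

section BooleanEvaluation

variable {V R : Type*} [Fintype V] [CommRing R]

theorem eval_indicator_sum_X (T : Finset V) :
    eval ((T : Set V).indicator 1) (∑ i, X i : MvPolynomial V R) = #T := by
  classical
  simp [Set.indicator_apply]

variable [LinearOrder V] (G : SimpleGraph V) [DecidableRel G.Adj]

theorem eval_indicator_sum_adj (T : Finset V) :
    eval ((T : Set V).indicator 1)
        (∑ p ∈ {p : V × V | p.1 < p.2 ∧ G.Adj p.1 p.2}, X p.1 * X p.2 : MvPolynomial V R) =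
      #{p ∈ T ×ˢ T | p.1 < p.2 ∧ G.Adj p.1 p.2} := by
  have hX (p : V × V) : eval ((T : Set V).indicator 1) (X p.1 * X p.2 : MvPolynomial V R) =
      if p ∈ T ×ˢ T then 1 else 0 := by
    by_cases h1 : p.1 ∈ T <;> by_cases h2 : p.2 ∈ T <;> simp [h1, h2]
  rw [map_sum]
  simp_rw [hX, sum_boole, filter_filter]
  congr 2
  ext p
  simp only [mem_filter, mem_univ, true_and, mem_product]
  tauto

end BooleanEvaluation

theorem stmt_8_general (n k : ℕ) (G : SimpleGraph (Fin n)) [DecidableRel G.Adj] :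
    (∃ S : Finset (Fin n), S.card ≤ k ∧ ∀ i j : Fin n, G.Adj i j → i ∈ S ∨ j ∈ S) ↔
    (∏ s ∈ Finset.Icc 1 (n.choose 2),
        ((∑ p ∈ Finset.univ.filter (fun p : Fin n × Fin n => p.1 < p.2 ∧ G.Adj p.1 p.2),
            (X p.1 * X p.2 : MvPolynomial (Fin n) ℚ)) - C (s : ℚ))) *
      (∏ t ∈ Finset.range (n - k), ((∑ i : Fin n, X i) - C (t : ℚ))) ∉
    Ideal.span (Set.range fun i : Fin n =>
      (X i : MvPolynomial (Fin n) ℚ) ^ 2 - X i) := by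
  have hcover := G.exists_isVertexCover_card_le_iff k
  rw [Fintype.card_fin] at hcover
  refine hcover.trans ?_
  rw [mem_span_X_sq_sub_X_iff, not_forall]
  refine exists_congr fun T => ?_
  have hedges := G.card_filter_adj_le_choose_two T
  rw [Fintype.card_fin] at hedges
  simp only [map_mul, map_prod, map_sub, eval_C, eval_indicator_sum_X, eval_indicator_sum_adj,
    ← ne_eq, mul_ne_zero_iff, prod_Icc_natCast_sub_ne_zero_iff hedges,
    prod_range_natCast_sub_ne_zero_iff, G.card_filter_adj_eq_zero_iff]

theorem stmt_8 (n k : ℕ) (hk : k < n) (G : SimpleGraph (Fin n)) [DecidableRel G.Adj] :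
    (∃ S : Finset (Fin n), S.card ≤ k ∧ ∀ i j : Fin n, G.Adj i j → i ∈ S ∨ j ∈ S) ↔
    (∏ s ∈ Finset.Icc 1 (n.choose 2),
        ((∑ p ∈ Finset.univ.filter (fun p : Fin n × Fin n => p.1 < p.2 ∧ G.Adj p.1 p.2),
            (X p.1 * X p.2 : MvPolynomial (Fin n) ℚ)) - C (s : ℚ))) *
      (∏ t ∈ Finset.range (n - k), ((∑ i : Fin n, X i) - C (t : ℚ))) ∉
    Ideal.span (Set.range fun i : Fin n =>
      (X i : MvPolynomial (Fin n) ℚ) ^ 2 - X i) :=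
  stmt_8_general n k G
end

section
/- Let f ∈ F[x_1,...,x_n], let I = ⟨p_1(x_1),...,p_n(x_n)⟩ be a univariate ideal, let R be the unique remainder of f modulo I, and let R_r be the unique remainder of f modulo the partial ideal I_{[r]} = ⟨p_1(x_1),...,p_r(x_r)⟩. Then for any α_1,...,α_r ∈ F, the polynomial R(α_1,...,α_r, x_{r+1},...,x_n) equals the remainder of R_r(α_1,...,α_r, x_{r+1},...,x_n) modulo the ideal ⟨p_{r+1}(x_{r+1}),...,p_n(x_n)⟩. -/
/-!
The two remainders differ by `Rr - R ∈ I`, which is reduced in the variables `x_i`, `i < r`.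
The key fact is that a polynomial of `I` that is reduced in the variables of a set `S` already
lies in the ideal generated by the `p_i(x_i)` with `i ∉ S` (for `S` everything, this is the
uniqueness of remainders). It is proved by induction on the number of variables: view `h ∈ I`
as a polynomial in `x_0` over the other variables and divide it by the monic `p_0`. Modulo the
ideal `I'` of the other variables the remainder is that of a multiple of `p_0`, so it is zero,
i.e. all coefficients of the remainder lie in `I'`; they stay reduced in `S` because division
by a polynomial with constant coefficients is linear over the constants.

Substituting constants for the `x_i`, `i < r`, fixes the generators `p_i(x_i)`, `i ≥ r`, and
does not raise the degree in the remaining variables, which gives both halves of the claim.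
-/

open MvPolynomial

/-- `R` is the remainder of `f` modulo the univariate ideal generated by the
polynomials `p i (x_i)` for `i ∈ s`. -/
def IsRemainder {F : Type*} [Field F] {n : ℕ} (p : Fin n → Polynomial F)
    (s : Set (Fin n)) (f R : MvPolynomial (Fin n) F) : Prop :=
  f - R ∈ Ideal.span ((fun i => Polynomial.aeval (X i : MvPolynomial (Fin n) F) (p i)) '' s) ∧
  ((∀ i ∈ s, R.degreeOf i < (p i).natDegree) ∨ R = 0)

noncomputable def univariateIdeal {R σ : Type*} [CommRing R] (p : σ → Polynomial R)
    (s : Set σ) : Ideal (MvPolynomial σ R) :=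
  Ideal.span ((fun i => Polynomial.aeval (X i) (p i)) '' s)

section

variable {R σ : Type*} [CommRing R]

theorem univariateIdeal_mono (p : σ → Polynomial R) {s t : Set σ} (hst : s ⊆ t) :
    univariateIdeal p s ≤ univariateIdeal p t :=
  Ideal.span_mono (Set.image_mono hst)

theorem univariateIdeal_congr_of_associated {p q : σ → Polynomial R} {s : Set σ}
    (hpq : ∀ i ∈ s, Associated (p i) (q i)) : univariateIdeal p s = univariateIdeal q s := by
  have key : ∀ {p q : σ → Polynomial R}, (∀ i ∈ s, Associated (p i) (q i)) →
      univariateIdeal p s ≤ univariateIdeal q s := by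
    intro p q hpq
    refine Ideal.span_le.mpr ?_
    rintro _ ⟨i, hi, rfl⟩
    exact Ideal.mem_of_dvd _ ((hpq i hi).symm.map (Polynomial.aeval (X i))).dvd
      (Ideal.subset_span ⟨i, hi, rfl⟩)
  exact le_antisymm (key hpq) (key fun i hi => (hpq i hi).symm)

theorem map_univariateIdeal_le (p : σ → Polynomial R) (s : Set σ)
    (φ : MvPolynomial σ R →ₐ[R] MvPolynomial σ R) (hφ : ∀ i ∈ s, φ (X i) = X i) :
    (univariateIdeal p s).map φ ≤ univariateIdeal p s := by
  rw [univariateIdeal, Ideal.map_span, Ideal.span_le]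
  rintro _ ⟨_, ⟨i, hi, rfl⟩, rfl⟩
  rw [← Polynomial.aeval_algHom_apply, hφ i hi]
  exact Ideal.subset_span ⟨i, hi, rfl⟩

theorem degreeOf_bind₁_le (g : σ → MvPolynomial σ R) {j : σ}
    (hj : degreeOf j (g j) ≤ 1) (hg : ∀ i ≠ j, degreeOf j (g i) = 0) (h : MvPolynomial σ R) :
    degreeOf j (bind₁ g h) ≤ degreeOf j h := by
  conv_lhs => rw [h.as_sum, map_sum]
  refine (degreeOf_sum_le _ _ _).trans (Finset.sup_le fun m hm => ?_)
  rw [bind₁_monomial]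
  calc degreeOf j (C (coeff m h) * ∏ i ∈ m.support, g i ^ m i)
      ≤ ∑ i ∈ m.support, m i * degreeOf j (g i) :=
        (degreeOf_C_mul_le _ _ _).trans <| (degreeOf_prod_le _ _ _).trans <|
          Finset.sum_le_sum fun i _ => degreeOf_pow_le _ _ _
    _ = m j * degreeOf j (g j) :=
        Finset.sum_eq_single j (fun i _ hij => by rw [hg i hij, mul_zero])
          (fun hj' => by rw [Finsupp.notMem_support_iff.mp hj', zero_mul])
    _ ≤ m j := mul_le_of_le_one_right (Nat.zero_le _) hj
    _ ≤ degreeOf j h := monomial_le_degreeOf j hm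

end

section

variable {R : Type*} [CommRing R] {n : ℕ}

theorem finSuccEquiv_aeval_X_zero (P : Polynomial R) :
    finSuccEquiv R n (Polynomial.aeval (X 0) P) =
      P.map (algebraMap R (MvPolynomial (Fin n) R)) := by
  rw [← Polynomial.aeval_algHom_apply, finSuccEquiv_X_zero,
    ← Polynomial.aeval_map_algebraMap (MvPolynomial (Fin n) R), Polynomial.aeval_X_left,
    AlgHom.id_apply]

theorem finSuccEquiv_aeval_X_succ (P : Polynomial R) (i : Fin n) :
    finSuccEquiv R n (Polynomial.aeval (X i.succ) P) =
      Polynomial.C (Polynomial.aeval (X i) P) := by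
  rw [← Polynomial.aeval_algHom_apply, finSuccEquiv_X_succ]
  exact Polynomial.aeval_algHom_apply Polynomial.CAlgHom (X i) P

theorem map_finSuccEquiv_univariateIdeal_le (p : Fin (n + 1) → Polynomial R)
    (s : Set (Fin (n + 1))) :
    (univariateIdeal p s).map (finSuccEquiv R n) ≤
      Ideal.span {(p 0).map (algebraMap R (MvPolynomial (Fin n) R))} ⊔
        (univariateIdeal (fun i => p i.succ) (Fin.succ ⁻¹' s)).map Polynomial.C := by
  rw [univariateIdeal, Ideal.map_span, Ideal.span_le]
  rintro _ ⟨_, ⟨i, hi, rfl⟩, rfl⟩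
  cases i using Fin.cases with
  | zero =>
    refine Ideal.mem_sup_left ?_
    rw [finSuccEquiv_aeval_X_zero]
    exact Ideal.mem_span_singleton_self _
  | succ i =>
    refine Ideal.mem_sup_right ?_
    rw [finSuccEquiv_aeval_X_succ]
    exact Ideal.mem_map_of_mem _ (Ideal.subset_span ⟨i, hi, rfl⟩)

theorem map_C_univariateIdeal_le_map_finSuccEquiv (p : Fin (n + 1) → Polynomial R)
    (s : Set (Fin (n + 1))) :
    (univariateIdeal (fun i => p i.succ) (Fin.succ ⁻¹' s)).map Polynomial.C ≤
      (univariateIdeal p s).map (finSuccEquiv R n) := by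
  rw [univariateIdeal, Ideal.map_span, Ideal.span_le]
  rintro _ ⟨_, ⟨i, hi, rfl⟩, rfl⟩
  rw [← finSuccEquiv_aeval_X_succ]
  exact Ideal.mem_map_of_mem _ (Ideal.subset_span ⟨i.succ, hi, rfl⟩)

theorem coeff_finSuccEquiv_mem_restrictSupport {d : Fin (n + 1) → ℕ} {S : Set (Fin (n + 1))}
    {h : MvPolynomial (Fin (n + 1)) R} (hS : h ∈ restrictSupport R {m | ∀ i ∈ S, m i < d i})
    (k : ℕ) :
    (finSuccEquiv R n h).coeff k ∈
      restrictSupport R {m | ∀ i ∈ Fin.succ ⁻¹' S, m i < d i.succ} := by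
  intro m hm i hi
  simpa only [Finsupp.cons_succ] using hS (mem_support_coeff_finSuccEquiv.mp hm) i.succ hi

theorem degree_finSuccEquiv_lt_of_mem_restrictSupport {d : Fin (n + 1) → ℕ}
    {S : Set (Fin (n + 1))} (hS0 : 0 ∈ S) {h : MvPolynomial (Fin (n + 1)) R}
    (hS : h ∈ restrictSupport R {m | ∀ i ∈ S, m i < d i}) :
    (finSuccEquiv R n h).degree < d 0 := by
  refine (Polynomial.degree_lt_iff_coeff_zero _ _).mpr fun k hk => ?_
  by_contra hne
  obtain ⟨m, hm⟩ := (MvPolynomial.support_nonempty).mpr hne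
  have := hS (mem_support_coeff_finSuccEquiv.mp hm) 0 hS0
  rw [Finsupp.cons_zero] at this
  omega

end

namespace Polynomial

variable {R : Type*} [CommRing R]

theorem modByMonic_mem_map_C_of_mem_sup {J : Ideal R} {q P : R[X]} (hq : q.Monic)
    (hP : P ∈ Ideal.span {q} ⊔ J.map C) : P %ₘ q ∈ J.map C := by
  obtain ⟨a, b, hb, rfl⟩ := Ideal.mem_span_singleton_sup.mp hP
  rw [← Ideal.mk_ker (I := J), ← ker_mapRingHom, RingHom.mem_ker, coe_mapRingHom] at hb ⊢
  rw [map_modByMonic _ hq, Polynomial.map_add, hb, add_zero, Polynomial.map_mul,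
    (modByMonic_eq_zero_iff_dvd (hq.map _)).mpr (dvd_mul_left _ _)]

theorem coeff_modByMonic_map_mem {B : Type*} [CommRing B] [Algebra R B] (M : Submodule R B)
    {q : R[X]} (hq : q.Monic) {P : B[X]} (hP : ∀ k, P.coeff k ∈ M) (l : ℕ) :
    (P %ₘ q.map (algebraMap R B)).coeff l ∈ M := by
  rw [P.as_sum_support_C_mul_X_pow]
  simp only [← modByMonicHom_apply, map_sum, finsetSum_coeff]
  refine Submodule.sum_mem _ fun k _ => ?_
  rw [C_mul', LinearMap.map_smul, modByMonicHom_apply, coeff_smul,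
    ← Polynomial.map_X (algebraMap R B), ← Polynomial.map_pow, ← map_modByMonic _ hq, coeff_map,
    smul_eq_mul, mul_comm, ← Algebra.smul_def]
  exact M.smul_mem _ (hP k)

end Polynomial

theorem mem_univariateIdeal_compl_of_mem_restrictSupport {R : Type*} [CommRing R] :
    ∀ {n : ℕ} (p : Fin n → Polynomial R), (∀ i, (p i).Monic) → ∀ (S : Set (Fin n))
      {h : MvPolynomial (Fin n) R}, h ∈ univariateIdeal p Set.univ →
      h ∈ restrictSupport R {m | ∀ i ∈ S, m i < (p i).natDegree} →
      h ∈ univariateIdeal p Sᶜ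
  | 0, p, _, S, h, hI, _ => by rwa [Subsingleton.elim Sᶜ Set.univ]
  | n + 1, p, hp, S, h, hI, hS => by
    nontriviality R
    set q := (p 0).map (algebraMap R (MvPolynomial (Fin n) R)) with hq_def
    have hq : q.Monic := (hp 0).map _
    have hrem : finSuccEquiv R n h %ₘ q ∈
        (univariateIdeal (fun i => p i.succ) (Fin.succ ⁻¹' S)ᶜ).map Polynomial.C := by
      have hmem := Polynomial.modByMonic_mem_map_C_of_mem_sup hq
        (map_finSuccEquiv_univariateIdeal_le p Set.univ (Ideal.mem_map_of_mem _ hI))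
      refine Ideal.mem_map_C_iff.mpr fun k =>
        mem_univariateIdeal_compl_of_mem_restrictSupport _ (fun i => hp i.succ) _
          (Ideal.mem_map_C_iff.mp hmem k) ?_
      exact Polynomial.coeff_modByMonic_map_mem _ (hp 0)
        (coeff_finSuccEquiv_mem_restrictSupport hS) k
    have hquot :
        q * (finSuccEquiv R n h /ₘ q) ∈ (univariateIdeal p Sᶜ).map (finSuccEquiv R n) := by
      by_cases hS0 : 0 ∈ S
      · rw [(Polynomial.divByMonic_eq_zero_iff hq).mpr, mul_zero]
        · exact zero_mem _
        · rw [hq_def, (hp 0).degree_map, Polynomial.degree_eq_natDegree (hp 0).ne_zero]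
          exact degree_finSuccEquiv_lt_of_mem_restrictSupport hS0 hS
      · refine Ideal.mul_mem_right _ _ ?_
        rw [hq_def, ← finSuccEquiv_aeval_X_zero]
        exact Ideal.mem_map_of_mem _ (Ideal.subset_span ⟨0, hS0, rfl⟩)
    refine Ideal.apply_mem_of_equiv_iff (f := (finSuccEquiv R n).toRingEquiv).mp ?_
    rw [AlgEquiv.coe_ringEquiv, ← Polynomial.modByMonic_add_div (finSuccEquiv R n h) q]
    exact add_mem (map_C_univariateIdeal_le_map_finSuccEquiv p Sᶜ hrem) hquot

section

variable {F : Type*} [Field F]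

theorem univariateIdeal_eq_top {σ : Type*} {p : σ → Polynomial F} {s : Set σ} {i : σ}
    (hi : i ∈ s) (hp : p i ≠ 0) (hd : (p i).natDegree = 0) : univariateIdeal p s = ⊤ := by
  have hc : (p i).coeff 0 ≠ 0 := fun h0 =>
    hp (by rw [Polynomial.eq_C_of_natDegree_eq_zero hd, h0, map_zero])
  refine Ideal.eq_top_of_isUnit_mem _ (Ideal.subset_span ⟨i, hi, rfl⟩) ?_
  change IsUnit (Polynomial.aeval (X i) (p i))
  rw [Polynomial.eq_C_of_natDegree_eq_zero hd, Polynomial.aeval_C]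
  exact (isUnit_iff_ne_zero.mpr hc).map _

theorem mem_univariateIdeal_compl {n : ℕ} {p : Fin n → Polynomial F} (hp : ∀ i, p i ≠ 0)
    {S : Set (Fin n)} {h : MvPolynomial (Fin n) F} (hI : h ∈ univariateIdeal p Set.univ)
    (hdeg : ∀ i ∈ S, degreeOf i h < (p i).natDegree) : h ∈ univariateIdeal p Sᶜ := by
  classical
  have hnormalize : ∀ s, univariateIdeal p s = univariateIdeal (fun i => normalize (p i)) s :=
    fun s => univariateIdeal_congr_of_associated fun i _ => associated_normalize _
  rw [hnormalize] at hI ⊢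
  refine mem_univariateIdeal_compl_of_mem_restrictSupport _
    (fun i => Polynomial.monic_normalize (hp i)) S hI fun m hm i hi => ?_
  rw [Polynomial.natDegree_eq_of_degree_eq Polynomial.degree_normalize]
  exact (monomial_le_degreeOf i hm).trans_lt (hdeg i hi)

variable {n : ℕ} {p : Fin n → Polynomial F} {s : Set (Fin n)} {f R : MvPolynomial (Fin n) F}

theorem IsRemainder.degreeOf_lt (hR : IsRemainder p s f R)
    (hd : ∀ i ∈ s, 0 < (p i).natDegree) : ∀ i ∈ s, degreeOf i R < (p i).natDegree :=
  hR.2.elim id fun h0 i hi => by rw [h0, degreeOf_zero]; exact hd i hi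

theorem IsRemainder.eq_zero (hR : IsRemainder p s f R) {i : Fin n} (hi : i ∈ s)
    (hd : (p i).natDegree = 0) : R = 0 :=
  hR.2.resolve_left fun h => by simpa [hd] using h i hi

theorem IsRemainder.sub_mem_univariateIdeal_compl (hp : ∀ i, p i ≠ 0)
    {Rs : MvPolynomial (Fin n) F}
    (hRs : IsRemainder p s f Rs) (hR : IsRemainder p Set.univ f R) :
    Rs - R ∈ univariateIdeal p sᶜ := by
  by_cases hd : ∀ i, 0 < (p i).natDegree
  · refine mem_univariateIdeal_compl hp ?_ fun i hi => ?_
    · rw [← sub_sub_sub_cancel_left R Rs f]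
      exact sub_mem hR.1 (univariateIdeal_mono p (Set.subset_univ s) hRs.1)
    · exact (degreeOf_sub_le i Rs R).trans_lt <| max_lt
        (hRs.degreeOf_lt (fun i _ => hd i) i hi) (hR.degreeOf_lt (fun i _ => hd i) i trivial)
  · obtain ⟨i, hi0⟩ : ∃ i, (p i).natDegree = 0 := by simpa [Nat.pos_iff_ne_zero] using hd
    by_cases his : i ∈ s
    · rw [hR.eq_zero trivial hi0, hRs.eq_zero his hi0, sub_zero]
      exact zero_mem _
    · rw [univariateIdeal_eq_top his (hp i) hi0]
      exact Submodule.mem_top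

end

theorem stmt_11_general (F : Type*) [Field F] (n r : ℕ)
    (p : Fin n → Polynomial F) (hp : ∀ i, p i ≠ 0)
    (f R Rr : MvPolynomial (Fin n) F) (α : Fin n → F)
    (hR : IsRemainder p Set.univ f R)
    (hRr : IsRemainder p {i : Fin n | (i : ℕ) < r} f Rr) :
    IsRemainder p {i : Fin n | r ≤ (i : ℕ)}
      (bind₁ (fun i : Fin n => if (i : ℕ) < r then C (α i) else X i) Rr)
      (bind₁ (fun i : Fin n => if (i : ℕ) < r then C (α i) else X i) R) := by
  set g : Fin n → MvPolynomial (Fin n) F := fun i => if (i : ℕ) < r then C (α i) else X i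
  have hg : ∀ i : Fin n, r ≤ (i : ℕ) → g i = X i := fun i hi => if_neg (not_lt.mpr hi)
  have hmem : Rr - R ∈ univariateIdeal p {i : Fin n | r ≤ (i : ℕ)} := by
    simpa only [Set.compl_ofPred, not_lt] using hRr.sub_mem_univariateIdeal_compl hp hR
  refine ⟨?_, hR.2.imp (fun hb i hi => ?_) (fun h0 => by rw [h0, map_zero])⟩
  · rw [← map_sub]
    exact map_univariateIdeal_le p _ (bind₁ g) (fun i hi => by rw [bind₁_X_right, hg i hi])
      (Ideal.mem_map_of_mem _ hmem)
  · refine (degreeOf_bind₁_le g ?_ (fun j hji => ?_) R).trans_lt (hb i trivial)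
    · rw [hg i hi, degreeOf_X, if_pos rfl]
    · by_cases hj : (j : ℕ) < r
      · simp only [g, if_pos hj, degreeOf_C]
      · simp only [g, if_neg hj, degreeOf_X, if_neg (Ne.symm hji)]

theorem stmt_11 (F : Type*) [Field F] (n r : ℕ) (hr : r ≤ n)
    (p : Fin n → Polynomial F) (hp : ∀ i, p i ≠ 0)
    (f R Rr : MvPolynomial (Fin n) F) (α : Fin n → F)
    (hR : IsRemainder p Set.univ f R)
    (hRr : IsRemainder p {i : Fin n | (i : ℕ) < r} f Rr) :
    IsRemainder p {i : Fin n | r ≤ (i : ℕ)}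
      (bind₁ (fun i : Fin n => if (i : ℕ) < r then C (α i) else X i) Rr)
      (bind₁ (fun i : Fin n => if (i : ℕ) < r then C (α i) else X i) R) :=
  stmt_11_general F n r p hp f R Rr α hR hRr
end

section
/- Let A be a k×n matrix over ℕ with columns c_i = (a_{1i},...,a_{ki}), let μ_j = Σ_{i=1}^n a_{ji}, and let b ∈ ℕ^k with b_j ≤ μ_j. Define P_A = ∏_{i=1}^n (y_1^{a_{1i}}⋯y_k^{a_{ki}} + x_1^{a_{1i}}⋯x_k^{a_{ki}}) in F[x_1,...,x_k,y_1,...,y_k] for a field F of characteristic 0. Then there exists x ∈ {0,1}ⁿ with Ax = b if and only if P_A ∉ ⟨x_1^{b_1+1}, y_1^{μ_1−b_1+1}, ..., x_k^{b_k+1}, y_k^{μ_k−b_k+1}⟩. -/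
open MvPolynomial

private lemma prod_monomial_one {F : Type*} [CommSemiring F] {σ ι : Type*}
    (s : Finset ι) (f : ι → (σ →₀ ℕ)) :
    ∏ i ∈ s, (monomial (f i) (1 : F)) = monomial (∑ i ∈ s, f i) 1 := by
  classical
  induction s using Finset.cons_induction with
  | empty => simp [monomial_zero']
  | cons a s ha ih => rw [Finset.prod_cons, Finset.sum_cons, ih, monomial_mul, one_mul]

theorem stmt_16 (F : Type*) [Field F] [CharZero F] (k n : ℕ)
    (A : Matrix (Fin k) (Fin n) ℕ) (b : Fin k → ℕ)
    (hb : ∀ j, b j ≤ ∑ i : Fin n, A j i) :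
    (∃ x : Fin n → ℕ, (∀ i, x i ≤ 1) ∧ ∀ j, (∑ i : Fin n, A j i * x i) = b j) ↔
    (∏ i : Fin n,
        ((∏ j : Fin k, (X (Sum.inr j) : MvPolynomial (Fin k ⊕ Fin k) F) ^ A j i) +
          ∏ j : Fin k, (X (Sum.inl j) : MvPolynomial (Fin k ⊕ Fin k) F) ^ A j i)) ∉
      Ideal.span
        ((Set.range fun j : Fin k =>
            (X (Sum.inl j) : MvPolynomial (Fin k ⊕ Fin k) F) ^ (b j + 1)) ∪
          (Set.range fun j : Fin k =>
            (X (Sum.inr j) : MvPolynomial (Fin k ⊕ Fin k) F) ^ ((∑ i : Fin n, A j i) - b j + 1))) := by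
  classical
  set μ : Fin k → ℕ := fun j => ∑ i : Fin n, A j i with hμ
  -- exponent vectors
  set cX : Fin n → (Fin k ⊕ Fin k →₀ ℕ) := fun i => ∑ j : Fin k, Finsupp.single (Sum.inl j) (A j i) with hcX
  set cY : Fin n → (Fin k ⊕ Fin k →₀ ℕ) := fun i => ∑ j : Fin k, Finsupp.single (Sum.inr j) (A j i) with hcY
  set d : Finset (Fin n) → (Fin k ⊕ Fin k →₀ ℕ) :=
    fun t => (∑ i ∈ t, cY i) + ∑ i ∈ Finset.univ \ t, cX i with hd
  have hdl : ∀ t j, d t (Sum.inl j) = ∑ i ∈ Finset.univ \ t, A j i := by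
    intro t j
    simp only [hd, hcX, hcY, Finsupp.add_apply, Finsupp.finset_sum_apply,
      Finsupp.single_apply]
    simp
  have hdr : ∀ t j, d t (Sum.inr j) = ∑ i ∈ t, A j i := by
    intro t j
    simp only [hd, hcX, hcY, Finsupp.add_apply, Finsupp.finset_sum_apply,
      Finsupp.single_apply]
    simp
  -- the product P as a sum of monomials
  have hP : (∏ i : Fin n,
        ((∏ j : Fin k, (X (Sum.inr j) : MvPolynomial (Fin k ⊕ Fin k) F) ^ A j i) +
          ∏ j : Fin k, (X (Sum.inl j) : MvPolynomial (Fin k ⊕ Fin k) F) ^ A j i))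
      = ∑ t ∈ (Finset.univ : Finset (Fin n)).powerset, monomial (d t) (1 : F) := by
    have h1 : ∀ i : Fin n, (∏ j : Fin k, (X (Sum.inr j) : MvPolynomial (Fin k ⊕ Fin k) F) ^ A j i)
        = monomial (cY i) 1 := by
      intro i
      simp_rw [X_pow_eq_monomial]
      exact prod_monomial_one _ _
    have h2 : ∀ i : Fin n, (∏ j : Fin k, (X (Sum.inl j) : MvPolynomial (Fin k ⊕ Fin k) F) ^ A j i)
        = monomial (cX i) 1 := by
      intro i
      simp_rw [X_pow_eq_monomial]
      exact prod_monomial_one _ _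
    simp_rw [h1, h2, Finset.prod_add]
    refine Finset.sum_congr rfl fun t _ => ?_
    rw [prod_monomial_one, prod_monomial_one, monomial_mul, mul_one]
  -- support characterization
  have hsupp : ∀ m : Fin k ⊕ Fin k →₀ ℕ,
      m ∈ (∑ t ∈ (Finset.univ : Finset (Fin n)).powerset, monomial (d t) (1 : F)).support ↔
        ∃ t : Finset (Fin n), d t = m := by
    intro m
    rw [mem_support_iff]
    have : coeff m (∑ t ∈ (Finset.univ : Finset (Fin n)).powerset, monomial (d t) (1 : F))
        = ((((Finset.univ : Finset (Fin n)).powerset.filter fun t => d t = m).card : ℕ) : F) := by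
      rw [coeff_sum]
      simp_rw [coeff_monomial]
      rw [Finset.sum_boole]
    rw [this]
    rw [Ne, Nat.cast_eq_zero, Finset.card_eq_zero, ← Ne, ← Finset.nonempty_iff_ne_empty]
    constructor
    · rintro ⟨t, ht⟩
      exact ⟨t, (Finset.mem_filter.mp ht).2⟩
    · rintro ⟨t, ht⟩
      exact ⟨t, Finset.mem_filter.mpr ⟨Finset.mem_powerset.mpr (Finset.subset_univ t), ht⟩⟩
  -- rewrite the ideal generators as monomials
  have hgen : ((Set.range fun j : Fin k =>
            (X (Sum.inl j) : MvPolynomial (Fin k ⊕ Fin k) F) ^ (b j + 1)) ∪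
          (Set.range fun j : Fin k =>
            (X (Sum.inr j) : MvPolynomial (Fin k ⊕ Fin k) F) ^ (μ j - b j + 1)))
      = (fun s => monomial s (1 : F)) ''
        ((Set.range fun j : Fin k => Finsupp.single (Sum.inl j : Fin k ⊕ Fin k) (b j + 1)) ∪
          (Set.range fun j : Fin k => Finsupp.single (Sum.inr j : Fin k ⊕ Fin k) (μ j - b j + 1))) := by
    rw [Set.image_union, ← Set.range_comp, ← Set.range_comp]
    simp [Function.comp_def, X_pow_eq_monomial]
  rw [hP, hgen, mem_ideal_span_monomial_image]
  push_neg
  simp_rw [Set.mem_union, Set.mem_range]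
  constructor
  · rintro ⟨x, hx1, hx2⟩
    set s1 : Finset (Fin n) := Finset.univ.filter fun i => x i = 1 with hs1
    refine ⟨d (Finset.univ \ s1), (hsupp _).mpr ⟨_, rfl⟩, ?_⟩
    have hcompl : Finset.univ \ (Finset.univ \ s1) = s1 := by
      simp [Finset.sdiff_sdiff_self_left]
    have hsum : ∀ j, ∑ i ∈ s1, A j i = b j := by
      intro j
      rw [← hx2 j, Finset.sum_filter]
      refine Finset.sum_congr rfl fun i _ => ?_
      have := hx1 i
      interval_cases h : x i <;> simp
    rintro si (⟨j, rfl⟩ | ⟨j, rfl⟩)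
    · rw [Finsupp.single_le_iff, hdl, hcompl, hsum]
      omega
    · rw [Finsupp.single_le_iff, hdr]
      have h1 : ∑ i ∈ Finset.univ \ s1, A j i + ∑ i ∈ s1, A j i = μ j := by
        rw [Finset.sum_sdiff (Finset.subset_univ s1)]
      have := hsum j
      have := hb j
      omega
  · rintro ⟨m, hm, hle⟩
    obtain ⟨t, ht⟩ := (hsupp m).mp hm
    have hl : ∀ j, m (Sum.inl j) ≤ b j := by
      intro j
      have := hle _ (Or.inl ⟨j, rfl⟩)
      rw [Finsupp.single_le_iff] at this
      omega
    have hr : ∀ j, m (Sum.inr j) ≤ μ j - b j := by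
      intro j
      have := hle _ (Or.inr ⟨j, rfl⟩)
      rw [Finsupp.single_le_iff] at this
      omega
    refine ⟨fun i => if i ∈ t then 0 else 1, fun i => by dsimp only; split <;> omega, fun j => ?_⟩
    show ∑ i : Fin n, A j i * (if i ∈ t then 0 else 1) = b j
    have h1 : ∑ i : Fin n, A j i * (if i ∈ t then 0 else 1) = ∑ i ∈ Finset.univ \ t, A j i := by
      simp only [mul_ite, mul_zero, mul_one]
      rw [Finset.sum_ite, Finset.sum_const_zero, zero_add, Finset.sdiff_eq_filter]
    have h2 : ∑ i ∈ Finset.univ \ t, A j i = m (Sum.inl j) := by rw [← ht, hdl]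
    have h3 : ∑ i ∈ t, A j i = m (Sum.inr j) := by rw [← ht, hdr]
    have h4 : ∑ i ∈ Finset.univ \ t, A j i + ∑ i ∈ t, A j i = μ j :=
      Finset.sum_sdiff (Finset.subset_univ t)
    have := hl j; have := hr j; have := hb j
    have hμj : μ j = ∑ i : Fin n, A j i := rfl
    omega
end
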